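/- arXiv:1906.10106 — 3 statements merged into one kernel-verified Lean document; each statement's English description precedes it below -/
import Mathlib

section
/- Let Δ be a proper+ KB and α a ground formula. Then Δ ⊨ α (every model satisfying all ∀-clauses of Δ satisfies α) if and only if GND⁻(Δ ∧ ¬α) is unsatisfiable, where Δ ∧ ¬α denotes the set of ∀-clauses Δ together with the ground formula ¬α, and GND⁻ grounds it over the names mentioned in Δ and α plus z arbitrary new names, z being the rank of Δ. That is, first-order entailment of a ground query from a proper+ KB reduces to unsatisfiability of a finite grounding. -/
namespace ImplicitFOL

attribute [local instance] Classical.propDecidable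

/-- Ground atoms: a predicate symbol applied to a tuple of names (natural numbers). -/
def GAtom {Pred : Type} (ar : Pred → ℕ) : Type :=
  Σ P : Pred, Fin (ar P) → ℕ

/-- A model assigns a Boolean value to every ground atom. -/
abbrev Model {Pred : Type} (ar : Pred → ℕ) : Type := GAtom ar → Bool

/-- A partial model maps every ground atom to {0,1,*}; `none` plays the role of `*`. -/
abbrev PartialModel {Pred : Type} (ar : Pred → ℕ) : Type := GAtom ar → Option Bool

/-- A literal: an atom or its negation (`true` = positive). -/
abbrev Lit {Pred : Type} (ar : Pred → ℕ) : Type := Bool × GAtom ar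

/-- A ground clause: a finite disjunction of literals. -/
abbrev Clause {Pred : Type} (ar : Pred → ℕ) : Type := Finset (Lit ar)

/-- Terms occurring in non-ground atoms: variables or names. -/
inductive Term : Type
  | var : ℕ → Term
  | name : ℕ → Term
  deriving DecidableEq

/-- Formulas built from acceptable equalities `x = a` using ¬, ∨, ∧. -/
inductive EqForm : Type
  | eq : ℕ → ℕ → EqForm
  | not : EqForm → EqForm
  | or : EqForm → EqForm → EqForm
  | and : EqForm → EqForm → EqForm
  deriving DecidableEq

/-- Non-ground atoms: a predicate applied to a tuple of terms. -/
def NGAtom {Pred : Type} (ar : Pred → ℕ) : Type :=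
  Σ P : Pred, Fin (ar P) → Term

/-- A ∀-clause ∀(e ⊃ c): `e` built from acceptable equalities, `c` a disjunction of atoms. -/
structure VClause {Pred : Type} (ar : Pred → ℕ) : Type where
  e : EqForm
  c : List (NGAtom ar)

/-- Ground formulas over atoms of type `A` (with truth constants). -/
inductive Form (A : Type) : Type
  | tru : Form A
  | fls : Form A
  | atom : A → Form A
  | not : Form A → Form A
  | or : Form A → Form A → Form A
  | and : Form A → Form A → Form A
  | imp : Form A → Form A → Form A

namespace Form

variable {A : Type}

/-- Evaluation of a ground formula in a model. -/
def eval (M : A → Bool) : Form A → Bool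
  | tru => true
  | fls => false
  | atom a => M a
  | not φ => !(eval M φ)
  | or φ ψ => eval M φ || eval M ψ
  | and φ ψ => eval M φ && eval M ψ
  | imp φ ψ => !(eval M φ) || eval M ψ

/-- Witnessed evaluation in a partial model: `some true`/`some false` mean
witnessed true/false, `none` means neither. -/
def wit (N : A → Option Bool) : Form A → Option Bool
  | tru => some true
  | fls => some false
  | atom a => N a
  | not φ => (wit N φ).map fun b => !b
  | or φ ψ =>
    match wit N φ, wit N ψ with
    | some true, _ => some true
    | _, some true => some true
    | some false, some false => some false
    | _, _ => none
  | and φ ψ =>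
    match wit N φ, wit N ψ with
    | some false, _ => some false
    | _, some false => some false
    | some true, some true => some true
    | _, _ => none
  | imp φ ψ =>
    match wit N φ, wit N ψ with
    | some false, _ => some true
    | _, some true => some true
    | some true, some false => some false
    | _, _ => none

/-- Restriction of a ground formula under a partial model. -/
def restrict (N : A → Option Bool) : Form A → Form A
  | tru => tru
  | fls => fls
  | atom a =>
    match N a with
    | some true => tru
    | some false => fls
    | none => atom a
  | not φ => not (restrict N φ)
  | or φ ψ => or (restrict N φ) (restrict N ψ)
  | and φ ψ => and (restrict N φ) (restrict N ψ)
  | imp φ ψ => imp (restrict N φ) (restrict N ψ)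

end Form

variable {Pred : Type} {ar : Pred → ℕ}

/-- A partial model `N` is consistent with a model `M`. -/
def Consistent (N : PartialModel ar) (M : Model ar) : Prop :=
  ∀ (p : GAtom ar) (b : Bool), N p = some b → M p = b

/-- A literal is true in a model. -/
def litTrue (M : Model ar) (l : Lit ar) : Prop := M l.2 = l.1

/-- A model satisfies a clause iff some literal of it is true. -/
def clauseTrue (M : Model ar) (c : Clause ar) : Prop := ∃ l ∈ c, litTrue M l

/-- Negation of a literal. -/
def negLit (l : Lit ar) : Lit ar := (!l.1, l.2)

/-- Names mentioned in a ground atom. -/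
def GAtom.names (a : GAtom ar) : Finset ℕ := Finset.image a.2 Finset.univ

/-- Names mentioned in a ground formula. -/
def Form.namesOf : Form (GAtom ar) → Finset ℕ
  | .tru => ∅
  | .fls => ∅
  | .atom a => GAtom.names a
  | .not φ => Form.namesOf φ
  | .or φ ψ => Form.namesOf φ ∪ Form.namesOf ψ
  | .and φ ψ => Form.namesOf φ ∪ Form.namesOf ψ
  | .imp φ ψ => Form.namesOf φ ∪ Form.namesOf ψ

/-- Names mentioned in a ground clause. -/
def Clause.namesOf (c : Clause ar) : Finset ℕ := c.sup fun l => GAtom.names l.2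

def Term.subst (θ : ℕ → ℕ) : Term → ℕ
  | .var v => θ v
  | .name n => n

def Term.namesOf : Term → Finset ℕ
  | .var _ => ∅
  | .name n => {n}

def Term.varsOf : Term → Finset ℕ
  | .var v => {v}
  | .name _ => ∅

/-- Evaluation of an equality formula under a substitution of names for variables. -/
def EqForm.eval (θ : ℕ → ℕ) : EqForm → Bool
  | .eq v n => θ v == n
  | .not e => !(EqForm.eval θ e)
  | .or e₁ e₂ => EqForm.eval θ e₁ || EqForm.eval θ e₂
  | .and e₁ e₂ => EqForm.eval θ e₁ && EqForm.eval θ e₂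

def EqForm.namesOf : EqForm → Finset ℕ
  | .eq _ n => {n}
  | .not e => EqForm.namesOf e
  | .or e₁ e₂ => EqForm.namesOf e₁ ∪ EqForm.namesOf e₂
  | .and e₁ e₂ => EqForm.namesOf e₁ ∪ EqForm.namesOf e₂

def EqForm.varsOf : EqForm → Finset ℕ
  | .eq v _ => {v}
  | .not e => EqForm.varsOf e
  | .or e₁ e₂ => EqForm.varsOf e₁ ∪ EqForm.varsOf e₂
  | .and e₁ e₂ => EqForm.varsOf e₁ ∪ EqForm.varsOf e₂

def NGAtom.subst (θ : ℕ → ℕ) (a : NGAtom ar) : GAtom ar :=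
  ⟨a.1, fun i => Term.subst θ (a.2 i)⟩

def NGAtom.namesOf (a : NGAtom ar) : Finset ℕ :=
  Finset.univ.biUnion fun i => Term.namesOf (a.2 i)

def NGAtom.varsOf (a : NGAtom ar) : Finset ℕ :=
  Finset.univ.biUnion fun i => Term.varsOf (a.2 i)

/-- Variables mentioned in a ∀-clause. -/
def VClause.varsOf (vc : VClause ar) : Finset ℕ :=
  EqForm.varsOf vc.e ∪ vc.c.foldr (fun a s => NGAtom.varsOf a ∪ s) ∅

/-- Names mentioned in a ∀-clause. -/
def VClause.namesOf (vc : VClause ar) : Finset ℕ :=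
  EqForm.namesOf vc.e ∪ vc.c.foldr (fun a s => NGAtom.namesOf a ∪ s) ∅

/-- The ground clause cθ obtained by applying the substitution θ to the clause part. -/
noncomputable def VClause.ground (vc : VClause ar) (θ : ℕ → ℕ) : Clause ar :=
  (vc.c.map fun a => ((true : Bool), NGAtom.subst θ a)).toFinset

/-- Substitutional satisfaction of a ∀-clause: every instance whose equality
condition holds is a true clause. -/
def VClause.sat (M : Model ar) (vc : VClause ar) : Prop :=
  ∀ θ : ℕ → ℕ, EqForm.eval θ vc.e = true → clauseTrue M (VClause.ground vc θ)

/-- Names mentioned in a KB. -/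
def kbNames (Δ : Finset (VClause ar)) : Finset ℕ := Δ.sup VClause.namesOf

/-- Rank of a KB: maximum number of variables mentioned in any ∀-clause of it. -/
def rank (Δ : Finset (VClause ar)) : ℕ := Δ.sup fun vc => (VClause.varsOf vc).card

/-- GND(Δ): grounding over all names. -/
def gnd (Δ : Finset (VClause ar)) : Set (Clause ar) :=
  { g | ∃ vc ∈ Δ, ∃ θ : ℕ → ℕ, EqForm.eval θ vc.e = true ∧ g = VClause.ground vc θ }

/-- GND(Δ, C): grounding over the names mentioned in Δ together with those in C. -/
def gndOver (Δ : Finset (VClause ar)) (C : Finset ℕ) : Set (Clause ar) :=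
  { g | ∃ vc ∈ Δ, ∃ θ : ℕ → ℕ, (∀ v, θ v ∈ kbNames Δ ∪ C) ∧
          EqForm.eval θ vc.e = true ∧ g = VClause.ground vc θ }

/-- A literal is made true by a partial model. -/
def litTrueN (N : PartialModel ar) (l : Lit ar) : Prop := N l.2 = some l.1

/-- A literal is made false by a partial model. -/
def litFalseN (N : PartialModel ar) (l : Lit ar) : Prop := N l.2 = some (!l.1)

/-- A ∀-clause is witnessed true in `N` for the set of names `C`: every grounding
over `C` whose equality condition holds yields a clause with a literal true under `N`. -/
def VClause.witnessed (N : PartialModel ar) (C : Finset ℕ) (vc : VClause ar) : Prop :=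
  ∀ θ : ℕ → ℕ, (∀ v, θ v ∈ C) → EqForm.eval θ vc.e = true →
    ∃ l ∈ VClause.ground vc θ, litTrueN N l

/-- U(s): the least superset of `s` closed under unit propagation. -/
inductive UP (s : Set (Clause ar)) : Clause ar → Prop
  | base {c : Clause ar} : c ∈ s → UP s c
  | unit {l : Lit ar} {c : Clause ar} :
      UP s {l} → UP s (insert (negLit l) c) → UP s c

/-- V(s): all weakenings of clauses of U(s). -/
def Vset (s : Set (Clause ar)) : Set (Clause ar) := { c | ∃ c', UP s c' ∧ c' ⊆ c }

/-- Limited entailment `s ⊨_z φ`. -/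
def entailsAt : ℕ → Set (Clause ar) → Clause ar → Prop
  | 0, s, φ => φ ∈ Vset s
  | z + 1, s, φ => ∃ c ∈ s, ∀ l ∈ c, entailsAt z (insert ({l} : Clause ar) s) φ

/-- Restriction of a ground clause under a partial model: `none` is the constant
true (some literal is made true by `N`); otherwise false literals are deleted. -/
noncomputable def restrictClause (N : PartialModel ar) (c : Clause ar) : Option (Clause ar) :=
  if ∃ l ∈ c, litTrueN N l then none else some (c.filter fun l => ¬ litFalseN N l)

/-- Restriction of a set of ground clauses (constant-true clauses are dropped). -/
def restrictSet (N : PartialModel ar) (F : Set (Clause ar)) : Set (Clause ar) :=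
  { c' | ∃ c ∈ F, restrictClause N c = some c' }

/-- Satisfaction of a possibly-trivially-true restricted clause. -/
def optClauseTrue (M : Model ar) : Option (Clause ar) → Prop
  | none => True
  | some c => clauseTrue M c

/-- Limited entailment where the constant true is deemed entailed at every level. -/
def entailsAtOpt (z : ℕ) (s : Set (Clause ar)) : Option (Clause ar) → Prop
  | none => True
  | some φ => entailsAt z s φ

/-!
A model of Δ satisfies every grounding of Δ, which gives one direction. Conversely, a model `M`
of the finite grounding in which `α` is false becomes a model of Δ once every atom is read in `M`
after collapsing all names outside those of Δ and `α` to a single new name `e₀` (one exists since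
every ∀-clause has a variable, so the rank is positive). An acceptable equality `x = a` only
compares with a name `a` of Δ, so the collapse preserves the equality conditions, and each
instance of a ∀-clause is thus read off an instance over the names of Δ, `α` and `e₀`. The
collapse fixes the names of `α`, so `α` is still false.
-/

lemma EqForm.varsOf_nonempty (e : EqForm) : e.varsOf.Nonempty := by
  induction e with
  | eq v n => exact ⟨v, Finset.mem_singleton_self v⟩
  | not e ih => exact ih
  | or e₁ e₂ ih₁ _ => exact ih₁.mono Finset.subset_union_left
  | and e₁ e₂ ih₁ _ => exact ih₁.mono Finset.subset_union_left

lemma rank_pos {Δ : Finset (VClause ar)} (hne : Δ.Nonempty) : 0 < rank Δ := by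
  obtain ⟨vc, hvc⟩ := hne
  have hvars : 0 < vc.varsOf.card :=
    Finset.card_pos.mpr ((EqForm.varsOf_nonempty vc.e).mono Finset.subset_union_left)
  exact hvars.trans_le (Finset.le_sup (f := fun vc => vc.varsOf.card) hvc)

lemma NGAtom.namesOf_subset_foldr {a : NGAtom ar} {l : List (NGAtom ar)} (ha : a ∈ l) :
    a.namesOf ⊆ l.foldr (fun a s => NGAtom.namesOf a ∪ s) ∅ := by
  induction l with
  | nil => simp at ha
  | cons b t ih =>
    rcases List.mem_cons.mp ha with rfl | ha
    · exact Finset.subset_union_left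
    · exact (ih ha).trans Finset.subset_union_right

lemma VClause.namesOf_subset_kbNames {Δ : Finset (VClause ar)} {vc : VClause ar}
    (hvc : vc ∈ Δ) : vc.namesOf ⊆ kbNames Δ :=
  Finset.le_sup (f := VClause.namesOf) hvc

lemma VClause.e_namesOf_subset {vc : VClause ar} : vc.e.namesOf ⊆ vc.namesOf :=
  Finset.subset_union_left

lemma VClause.atom_namesOf_subset {vc : VClause ar} {a : NGAtom ar} (ha : a ∈ vc.c) :
    a.namesOf ⊆ vc.namesOf :=
  (NGAtom.namesOf_subset_foldr ha).trans Finset.subset_union_right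

def GAtom.rename (ι : ℕ → ℕ) (p : GAtom ar) : GAtom ar := ⟨p.1, fun i => ι (p.2 i)⟩

lemma GAtom.rename_eq_self {ι : ℕ → ℕ} {p : GAtom ar} (hι : ∀ x ∈ p.names, ι x = x) :
    p.rename ι = p :=
  Sigma.ext rfl (heq_of_eq (funext fun i =>
    hι _ (Finset.mem_image.mpr ⟨i, Finset.mem_univ i, rfl⟩)))

lemma Form.eval_comp_rename {M : Model ar} {ι : ℕ → ℕ} {φ : Form (GAtom ar)}
    (hι : ∀ x ∈ φ.namesOf, ι x = x) : Form.eval (M ∘ GAtom.rename ι) φ = Form.eval M φ := by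
  induction φ with
  | tru | fls => rfl
  | atom p => exact congrArg M (GAtom.rename_eq_self hι)
  | not φ ih => exact congrArg (!·) (ih hι)
  | or φ ψ ihφ ihψ | and φ ψ ihφ ihψ | imp φ ψ ihφ ihψ =>
    simp only [Form.namesOf, Finset.mem_union] at hι
    simp only [Form.eval, ihφ fun x hx => hι x (Or.inl hx), ihψ fun x hx => hι x (Or.inr hx)]

lemma EqForm.eval_comp {B : Finset ℕ} {ι θ : ℕ → ℕ} (hfix : ∀ x ∈ B, ι x = x)
    (hout : ∀ x ∉ B, ι x ∉ B) {e : EqForm} (he : e.namesOf ⊆ B) :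
    EqForm.eval (ι ∘ θ) e = EqForm.eval θ e := by
  induction e with
  | eq v n =>
    have hn : n ∈ B := he (Finset.mem_singleton_self n)
    by_cases hv : θ v ∈ B
    · simp only [EqForm.eval, Function.comp_apply, hfix _ hv]
    · have h₁ : ι (θ v) ≠ n := fun h => hout _ hv (h ▸ hn)
      have h₂ : θ v ≠ n := fun h => hv (h ▸ hn)
      simp [EqForm.eval, h₁, h₂]
  | not e ih => exact congrArg (!·) (ih he)
  | or e₁ e₂ ih₁ ih₂ | and e₁ e₂ ih₁ ih₂ =>
    simp only [EqForm.eval, ih₁ (Finset.subset_union_left.trans he),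
      ih₂ (Finset.subset_union_right.trans he)]

lemma NGAtom.subst_comp {ι θ : ℕ → ℕ} {a : NGAtom ar} (hι : ∀ x ∈ a.namesOf, ι x = x) :
    a.subst (ι ∘ θ) = (a.subst θ).rename ι := by
  refine Sigma.ext rfl (heq_of_eq (funext fun i => ?_))
  cases ht : a.2 i with
  | var v => simp [NGAtom.subst, GAtom.rename, ht, Term.subst]
  | name n =>
    have hn : n ∈ a.namesOf :=
      Finset.mem_biUnion.mpr ⟨i, Finset.mem_univ i, by simp [ht, Term.namesOf]⟩
    simp [NGAtom.subst, GAtom.rename, ht, Term.subst, hι n hn]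

lemma VClause.sat_comp_rename {M : Model ar} {ι : ℕ → ℕ} {vc : VClause ar}
    (hι : ∀ x ∈ vc.namesOf, ι x = x)
    (hM : ∀ θ, EqForm.eval θ vc.e = true → clauseTrue M (vc.ground (ι ∘ θ))) :
    vc.sat (M ∘ GAtom.rename ι) := by
  intro θ hθ
  obtain ⟨l, hl, hlM⟩ := hM θ hθ
  obtain ⟨a, ha, rfl⟩ := List.mem_map.mp (List.mem_toFinset.mp hl)
  refine ⟨(true, a.subst θ), List.mem_toFinset.mpr (List.mem_map.mpr ⟨a, ha, rfl⟩), ?_⟩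
  change M ((a.subst θ).rename ι) = true
  rwa [← NGAtom.subst_comp fun x hx => hι x (VClause.atom_namesOf_subset ha hx)]

def collapse (B : Finset ℕ) (e₀ : ℕ) (x : ℕ) : ℕ := if x ∈ B then x else e₀

lemma sat_comp_rename_collapse {Δ : Finset (VClause ar)} {B C : Finset ℕ} {e₀ : ℕ}
    {M : Model ar} (hΔB : kbNames Δ ⊆ B) (hBC : B ⊆ kbNames Δ ∪ C) (he₀C : e₀ ∈ C)
    (he₀B : e₀ ∉ B) (hM : ∀ g ∈ gndOver Δ C, clauseTrue M g) :
    ∀ vc ∈ Δ, vc.sat (M ∘ GAtom.rename (collapse B e₀)) := by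
  intro vc hvc
  have hnames := (VClause.namesOf_subset_kbNames hvc).trans hΔB
  have hfix : ∀ x ∈ B, collapse B e₀ x = x := fun x hx => if_pos hx
  have hout : ∀ x ∉ B, collapse B e₀ x ∉ B := fun x hx => by rwa [collapse, if_neg hx]
  have hrange : ∀ x, collapse B e₀ x ∈ kbNames Δ ∪ C := fun x => by
    unfold collapse
    split_ifs with hx
    · exact hBC hx
    · exact Finset.mem_union_right _ he₀C
  refine VClause.sat_comp_rename (fun x hx => hfix x (hnames hx)) fun θ hθ => hM _ ?_
  refine ⟨vc, hvc, collapse B e₀ ∘ θ, fun v => hrange (θ v), ?_, rfl⟩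
  rwa [EqForm.eval_comp hfix hout (VClause.e_namesOf_subset.trans hnames)]

lemma clauseTrue_of_mem_gndOver {Δ : Finset (VClause ar)} {C : Finset ℕ} {M : Model ar}
    (hM : ∀ vc ∈ Δ, vc.sat M) : ∀ g ∈ gndOver Δ C, clauseTrue M g := by
  rintro g ⟨vc, hvc, θ, -, hθ, rfl⟩
  exact hM vc hvc θ hθ

lemma exists_card_eq_disjoint (s : Finset ℕ) (n : ℕ) :
    ∃ E : Finset ℕ, E.card = n ∧ Disjoint E s := by
  obtain ⟨E, hE, hcard⟩ := s.finite_toSet.infinite_compl.exists_subset_card_eq n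
  exact ⟨E, hcard, Finset.disjoint_left.mpr fun x hx => hE hx⟩

variable [Countable Pred]

/-- Theorem: first-order entailment of a ground query from a
proper⁺ KB reduces to unsatisfiability of a finite grounding:
Δ ⊨ α iff GND⁻(Δ ∧ ¬α) is unsatisfiable, where the grounding is over the names
of Δ and α plus `rank Δ` arbitrary new names. -/
theorem statement1
    (Δ : Finset (VClause ar)) (hne : Δ.Nonempty) (α : Form (GAtom ar)) :
    (∀ M : Model ar, (∀ vc ∈ Δ, VClause.sat M vc) → Form.eval M α = true) ↔
      (∀ E : Finset ℕ, E.card = rank Δ → Disjoint E (kbNames Δ ∪ Form.namesOf α) →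
        ¬ ∃ M : Model ar,
            (∀ g ∈ gndOver Δ (Form.namesOf α ∪ E), clauseTrue M g) ∧
            Form.eval M α = false) := by
  constructor
  · rintro hentails E hcard hdisj ⟨M, hM, hα⟩
    obtain ⟨e₀, he₀⟩ := Finset.card_pos.mp (hcard ▸ rank_pos hne)
    set B := kbNames Δ ∪ α.namesOf
    have hBC : B ⊆ kbNames Δ ∪ (α.namesOf ∪ E) :=
      Finset.union_subset_union_right Finset.subset_union_left
    have hsat := sat_comp_rename_collapse Finset.subset_union_left hBC
      (Finset.mem_union_right _ he₀) (Finset.disjoint_left.mp hdisj he₀) hM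
    have hαB : ∀ x ∈ α.namesOf, collapse B e₀ x = x :=
      fun x hx => if_pos (Finset.mem_union_right _ hx)
    have hαM := hentails _ hsat
    rw [Form.eval_comp_rename hαB, hα] at hαM
    exact Bool.false_ne_true hαM
  · intro hunsat M hM
    obtain ⟨E, hcard, hdisj⟩ := exists_card_eq_disjoint (kbNames Δ ∪ α.namesOf) (rank Δ)
    by_contra hα
    exact hunsat E hcard hdisj ⟨M, clauseTrue_of_mem_gndOver hM, Bool.eq_false_iff.mpr hα⟩

end ImplicitFOL
end

section
/- Soundness of limited belief: for any set s of ground clauses, any ground clause φ, and any z ∈ ℕ, if s ⊨_z φ then s ⊨ φ, i.e., every model satisfying all clauses of s satisfies φ. -/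
namespace ImplicitFOL

attribute [local instance] Classical.propDecidable

variable {Pred : Type} {ar : Pred → ℕ}

/-! Unit propagation is resolution against a unit clause, so every clause of `U(s)` holds in
each model of `s`, and so does every weakening of one. A split on a clause `c ∈ s` is sound
because a model of `s` makes some literal `l ∈ c` true and is therefore a model of `s ∪ {l}`. -/

theorem litTrue_negLit {M : Model ar} {l : Lit ar} : litTrue M (negLit l) ↔ ¬ litTrue M l := by
  cases h : M l.2 <;> cases hl : l.1 <;> simp [litTrue, negLit, h, hl]

theorem clauseTrue_mono {M : Model ar} {c d : Clause ar} (hcd : c ⊆ d) :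
    clauseTrue M c → clauseTrue M d
  | ⟨l, hl, hlt⟩ => ⟨l, hcd hl, hlt⟩

theorem clauseTrue_singleton {M : Model ar} {l : Lit ar} : clauseTrue M {l} ↔ litTrue M l := by
  simp [clauseTrue]

theorem clauseTrue_insert {M : Model ar} {l : Lit ar} {c : Clause ar} :
    clauseTrue M (insert l c) ↔ litTrue M l ∨ clauseTrue M c := by
  simp [clauseTrue]

theorem UP.clauseTrue {s : Set (Clause ar)} {c : Clause ar} {M : Model ar}
    (hM : ∀ c ∈ s, clauseTrue M c) (h : UP s c) : clauseTrue M c := by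
  induction h with
  | base hc => exact hM _ hc
  | unit _ _ ihUnit ihResolvent =>
    rw [clauseTrue_singleton] at ihUnit
    rw [clauseTrue_insert, litTrue_negLit] at ihResolvent
    exact ihResolvent.resolve_left (not_not.mpr ihUnit)

theorem clauseTrue_of_mem_Vset {s : Set (Clause ar)} {c : Clause ar} {M : Model ar}
    (hM : ∀ c ∈ s, clauseTrue M c) : c ∈ Vset s → clauseTrue M c
  | ⟨_, hUP, hsub⟩ => clauseTrue_mono hsub (hUP.clauseTrue hM)

theorem entailsAt.clauseTrue {z : ℕ} {s : Set (Clause ar)} {φ : Clause ar} {M : Model ar}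
    (hM : ∀ c ∈ s, clauseTrue M c) (h : entailsAt z s φ) : clauseTrue M φ := by
  induction z generalizing s with
  | zero => exact clauseTrue_of_mem_Vset hM h
  | succ z ih =>
    obtain ⟨c, hc, hsplit⟩ := h
    obtain ⟨l, hl, hlt⟩ := hM c hc
    refine ih ?_ (hsplit l hl)
    rintro d (rfl | hd)
    · exact clauseTrue_singleton.mpr hlt
    · exact hM d hd

variable [Countable Pred]

/-- Soundness of limited belief: if s ⊨_z φ then s ⊨ φ. -/
theorem statement4
    (s : Set (Clause ar)) (φ : Clause ar) (z : ℕ)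
    (h : entailsAt z s φ)
    (M : Model ar) (hM : ∀ c ∈ s, clauseTrue M c) :
    clauseTrue M φ := by
  exact h.clauseTrue hM

end ImplicitFOL
end

section
/- Limited entailment is restriction-closed: let Δ be a set of ground clauses, φ a ground clause, z ∈ ℕ, and N a partial model. If Δ ⊨_z φ, then (Δ|_N) ⊨_z (φ|_N), where restriction under N replaces each atom assigned a value by N with that truth value (so a clause containing a literal made true by N restricts to the trivially true clause, which is entailed at every level, and literals made false by N are deleted). -/
/-!
Unit propagation commutes with restriction: every clause derived in U(Δ) either contains a
literal made true by N or has its restriction subsumed by a clause of U(Δ|_N). For a split on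
a clause c of Δ, either c has a literal l made true by N, and the single branch for l suffices
because {l} vanishes under restriction, or the split is replayed on c|_N, whose literals are
the unassigned literals of c.
-/
namespace ImplicitFOL

attribute [local instance] Classical.propDecidable

variable {Pred : Type} {ar : Pred → ℕ}

/-- The clause `c|_N` when no literal of `c` is made true by `N`. -/
noncomputable def dropFalse (N : PartialModel ar) (c : Clause ar) : Clause ar :=
  c.filter fun l => ¬ litFalseN N l

section Literal

variable {N : PartialModel ar} {l : Lit ar} {c : Clause ar}

lemma litTrueN_negLit : litTrueN N (negLit l) ↔ litFalseN N l := by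
  simp [litTrueN, litFalseN, negLit]

lemma litFalseN_negLit : litFalseN N (negLit l) ↔ litTrueN N l := by
  simp [litTrueN, litFalseN, negLit]

lemma not_litFalseN_of_litTrueN (h : litTrueN N l) : ¬ litFalseN N l := by
  rw [litFalseN, show N l.2 = some l.1 from h]
  simp

lemma dropFalse_insert_of_litFalseN (h : litFalseN N l) :
    dropFalse N (insert l c) = dropFalse N c := by
  rw [dropFalse, Finset.filter_insert, if_neg (not_not_intro h)]; rfl

lemma dropFalse_insert (h : ¬ litFalseN N l) :
    dropFalse N (insert l c) = insert l (dropFalse N c) := by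
  rw [dropFalse, Finset.filter_insert, if_pos h]; rfl

lemma dropFalse_singleton_of_litFalseN (h : litFalseN N l) : dropFalse N {l} = ∅ := by
  rw [dropFalse, Finset.filter_singleton, if_neg (not_not_intro h)]

lemma dropFalse_singleton (h : ¬ litFalseN N l) : dropFalse N {l} = {l} := by
  rw [dropFalse, Finset.filter_singleton, if_pos h]

lemma restrictClause_of_not_exists (h : ¬ ∃ l ∈ c, litTrueN N l) :
    restrictClause N c = some (dropFalse N c) :=
  if_neg h

lemma restrictClause_singleton_of_litTrueN (h : litTrueN N l) : restrictClause N {l} = none :=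
  if_pos ⟨l, Finset.mem_singleton_self l, h⟩

lemma restrictClause_singleton (ht : ¬ litTrueN N l) (hf : ¬ litFalseN N l) :
    restrictClause N {l} = some {l} := by
  rw [restrictClause_of_not_exists (by simpa using ht), dropFalse_singleton hf]

end Literal

lemma UP.mono {s s' : Set (Clause ar)} (h : s ⊆ s') {c : Clause ar} (hc : UP s c) :
    UP s' c := by
  induction hc with
  | base hc => exact UP.base (h hc)
  | unit _ _ ih₁ ih₂ => exact UP.unit ih₁ ih₂

lemma UP.nonempty {s : Set (Clause ar)} {c : Clause ar} (h : UP s c) : s.Nonempty := by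
  induction h with
  | base hc => exact ⟨_, hc⟩
  | unit _ _ ih _ => exact ih

lemma UP.mem_Vset {s : Set (Clause ar)} {c : Clause ar} (h : UP s c) : c ∈ Vset s :=
  ⟨c, h, subset_rfl⟩

lemma Vset_mono {s s' : Set (Clause ar)} (h : s ⊆ s') : Vset s ⊆ Vset s' :=
  fun _ ⟨c', hc', hsub⟩ => ⟨c', hc'.mono h, hsub⟩

lemma mem_Vset_of_subset {s : Set (Clause ar)} {c d : Clause ar} (hc : c ∈ Vset s)
    (h : c ⊆ d) : d ∈ Vset s :=
  let ⟨c', hc', hsub⟩ := hc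
  ⟨c', hc', hsub.trans h⟩

lemma Vset.unit {s : Set (Clause ar)} {l : Lit ar} {c : Clause ar}
    (hl : {l} ∈ Vset s) (hc : insert (negLit l) c ∈ Vset s) : c ∈ Vset s := by
  obtain ⟨u, hu, hul⟩ := hl
  obtain ⟨d, hd, hdc⟩ := hc
  rcases Finset.subset_singleton_iff.mp hul with rfl | rfl
  · exact ⟨∅, hu, Finset.empty_subset c⟩
  rw [Finset.subset_insert_iff] at hdc
  by_cases hneg : negLit l ∈ d
  · exact ⟨d.erase (negLit l), UP.unit hu (by rwa [Finset.insert_erase hneg]), hdc⟩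
  · exact ⟨d, hd, Finset.erase_eq_of_notMem hneg ▸ hdc⟩

lemma UP.restrict (N : PartialModel ar) {Δ : Set (Clause ar)} {c : Clause ar} (h : UP Δ c) :
    (∃ l ∈ c, litTrueN N l) ∨ dropFalse N c ∈ Vset (restrictSet N Δ) := by
  induction h with
  | @base d hd =>
    by_cases ht : ∃ l ∈ d, litTrueN N l
    · exact Or.inl ht
    · exact Or.inr
        (UP.base (s := restrictSet N Δ) ⟨d, hd, restrictClause_of_not_exists ht⟩).mem_Vset
  | @unit l d _ _ ih₁ ih₂ =>
    rw [Finset.exists_mem_insert, litTrueN_negLit] at ih₂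
    by_cases hlt : litTrueN N l
    · rw [dropFalse_insert_of_litFalseN (litFalseN_negLit.mpr hlt), or_assoc] at ih₂
      exact ih₂.resolve_left (not_litFalseN_of_litTrueN hlt)
    rcases ih₁ with ⟨l', hl', hl't⟩ | ih₁
    · exact absurd (Finset.mem_singleton.mp hl' ▸ hl't) hlt
    by_cases hlf : litFalseN N l
    · rw [dropFalse_singleton_of_litFalseN hlf] at ih₁
      exact Or.inr (mem_Vset_of_subset ih₁ (Finset.empty_subset _))
    rw [dropFalse_singleton hlf] at ih₁
    rw [dropFalse_insert (mt litFalseN_negLit.mp hlt)] at ih₂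
    rcases ih₂ with (hl | hd) | hd
    · exact absurd hl hlf
    · exact Or.inl hd
    · exact Or.inr (Vset.unit ih₁ hd)

lemma entailsAt_mono : ∀ (z : ℕ) {s s' : Set (Clause ar)}, s ⊆ s' → ∀ {φ : Clause ar},
    entailsAt z s φ → entailsAt z s' φ
  | 0, _, _, h, _, hφ => Vset_mono h hφ
  | z + 1, _, _, h, _, ⟨c, hc, hl⟩ =>
    ⟨c, h hc, fun l hlc => entailsAt_mono z (Set.insert_subset_insert h) (hl l hlc)⟩

lemma entailsAt.nonempty {z : ℕ} {s : Set (Clause ar)} {φ : Clause ar}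
    (h : entailsAt z s φ) : s.Nonempty := by
  cases z with
  | zero => obtain ⟨_, hup, _⟩ := h; exact hup.nonempty
  | succ z => obtain ⟨c, hc, _⟩ := h; exact ⟨c, hc⟩

lemma entailsAt.succ {z : ℕ} {s : Set (Clause ar)} {φ : Clause ar}
    (h : entailsAt z s φ) : entailsAt (z + 1) s φ := by
  obtain ⟨c, hc⟩ := h.nonempty
  exact ⟨c, hc, fun _ _ => entailsAt_mono z (Set.subset_insert _ _) h⟩

lemma restrictSet_insert_of_none {N : PartialModel ar} {Δ : Set (Clause ar)} {c : Clause ar}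
    (h : restrictClause N c = none) : restrictSet N (insert c Δ) = restrictSet N Δ := by
  ext x
  simp [restrictSet, or_and_right, exists_or, h]

lemma restrictSet_insert_of_some {N : PartialModel ar} {Δ : Set (Clause ar)}
    {c c' : Clause ar} (h : restrictClause N c = some c') :
    restrictSet N (insert c Δ) = insert c' (restrictSet N Δ) := by
  ext x
  simp [restrictSet, or_and_right, exists_or, h, eq_comm]

lemma entailsAt_restrict (N : PartialModel ar) {φ : Clause ar}
    (hφ : ¬ ∃ l ∈ φ, litTrueN N l) :
    ∀ (z : ℕ) {Δ : Set (Clause ar)}, entailsAt z Δ φ →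
      entailsAt z (restrictSet N Δ) (dropFalse N φ)
  | 0, _, ⟨c, hc, hcφ⟩ =>
    (hc.restrict N).elim (fun ⟨l, hl, hlt⟩ => absurd ⟨l, hcφ hl, hlt⟩ hφ)
      (mem_Vset_of_subset · (Finset.filter_subset_filter _ hcφ))
  | z + 1, Δ, ⟨c, hc, hsplit⟩ => by
    by_cases hct : ∃ l ∈ c, litTrueN N l
    · obtain ⟨l, hlc, hlt⟩ := hct
      have := entailsAt_restrict N hφ z (hsplit l hlc)
      rw [restrictSet_insert_of_none (restrictClause_singleton_of_litTrueN hlt)] at this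
      exact this.succ
    refine ⟨dropFalse N c, ⟨c, hc, restrictClause_of_not_exists hct⟩, fun l hl => ?_⟩
    obtain ⟨hlc, hlf⟩ := Finset.mem_filter.mp hl
    have hlt : ¬ litTrueN N l := fun h => hct ⟨l, hlc, h⟩
    have := entailsAt_restrict N hφ z (hsplit l hlc)
    rwa [restrictSet_insert_of_some (restrictClause_singleton hlt hlf)] at this

variable [Countable Pred]

/-- Limited entailment is restriction-closed:
if Δ ⊨_z φ then (Δ|_N) ⊨_z (φ|_N), where a clause with a literal made true by N
restricts to the trivially true clause (entailed at every level) and literals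
made false by N are deleted. -/
theorem statement5
    (Δ : Set (Clause ar)) (φ : Clause ar) (z : ℕ) (N : PartialModel ar)
    (h : entailsAt z Δ φ) :
    entailsAtOpt z (restrictSet N Δ) (restrictClause N φ) := by
  by_cases hφ : ∃ l ∈ φ, litTrueN N l
  · rw [restrictClause, if_pos hφ]
    trivial
  · rw [restrictClause_of_not_exists hφ]
    exact entailsAt_restrict N hφ z h

end ImplicitFOL
end
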